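/- Let (G, 𝒫, 𝒯) be an instance of Partitioned Vertex Cover and let H be the Popular Matching instance constructed from it. If M is a popular matching in H and U := {i ∈ V(G) : {a_i, b_i} ∈ M}, then for every pair P ∈ 𝒫 it holds that |U ∩ P| = 1. -/

import Mathlib

open SimpleGraph

universe u

/-- A matching: a set of edges of `G` that are pairwise vertex-disjoint. -/
def IsMatching {W : Type u} (G : SimpleGraph W) (M : Set (Sym2 W)) : Prop :=
  M ⊆ G.edgeSet ∧ ∀ e ∈ M, ∀ e' ∈ M, e ≠ e' → ∀ v : W, v ∈ e → v ∉ e'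

/-- `v` is matched by `M`. -/
def Matched {W : Type u} (M : Set (Sym2 W)) (v : W) : Prop := ∃ w : W, s(v, w) ∈ M

open scoped Classical in
/-- `rank G pref M v = pref v (M(v))`, with the convention `|N(v)|+1` if `v` is unmatched. -/
noncomputable def rank {W : Type u} (G : SimpleGraph W) (pref : W → W → ℕ)
    (M : Set (Sym2 W)) (v : W) : ℕ :=
  if h : ∃ w : W, s(v, w) ∈ M then pref v h.choose else (G.neighborSet v).ncard + 1

/-- The number of vertices preferring `M` over `M'`. -/
noncomputable def vote {W : Type u} (G : SimpleGraph W) (pref : W → W → ℕ)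
    (M M' : Set (Sym2 W)) : ℕ :=
  {v : W | rank G pref M v < rank G pref M' v}.ncard

/-- A popular matching: no other matching is more popular. -/
def IsPopular {W : Type u} (G : SimpleGraph W) (pref : W → W → ℕ) (M : Set (Sym2 W)) : Prop :=
  IsMatching G M ∧
    ∀ M' : Set (Sym2 W), IsMatching G M' → vote G pref M' M ≤ vote G pref M M'

/-- Each vertex has a strict preference list: `pref v` is a bijection from the
neighborhood of `v` onto `{1, …, |N(v)|}`. -/
def HasPref {W : Type u} (G : SimpleGraph W) (pref : W → W → ℕ) : Prop :=
  ∀ v : W, Set.BijOn (pref v) (G.neighborSet v) (Set.Icc 1 (G.neighborSet v).ncard)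

/-- The edge `e ∉ M` is labeled `+2` by `label_M` (given rank function `rk`):
both endpoints prefer each other over their status in `M`. -/
def EdgePlus {W : Type u} (pref : W → W → ℕ) (rk : W → ℕ) (e : Sym2 W) : Prop :=
  ∃ x y : W, e = s(x, y) ∧ pref x y < rk x ∧ pref y x < rk y

/-- The edge `e ∉ M` is labeled `-2` by `label_M` (given rank function `rk`):
both endpoints prefer their status in `M` over each other. -/
def EdgeMinus {W : Type u} (pref : W → W → ℕ) (rk : W → ℕ) (e : Sym2 W) : Prop :=
  ∃ x y : W, e = s(x, y) ∧ rk x < pref x y ∧ rk y < pref y x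

/-- The graph `G_M`: the spanning subgraph of `G` consisting of the edges of `M`
together with the edges not labeled `-2`. -/
def GMgraph {W : Type u} (G : SimpleGraph W) (pref : W → W → ℕ) (M : Set (Sym2 W)) :
    SimpleGraph W where
  Adj x y := G.Adj x y ∧ (s(x, y) ∈ M ∨ ¬ EdgeMinus pref (rank G pref M) s(x, y))
  symm := by
    constructor
    intro x y h
    refine ⟨h.1.symm, ?_⟩
    rw [Sym2.eq_swap]
    exact h.2
  loopless := ⟨fun x h => G.loopless.irrefl x h.1⟩

/-- Consecutive edges alternate between `M` and non-`M`. -/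
def altRel {W : Type u} (M : Set (Sym2 W)) (e e' : Sym2 W) : Prop := e ∈ M ↔ e' ∉ M

/-- An alternating path (with respect to `M`) in a graph `G'`. -/
def IsAltPath {W : Type u} (M : Set (Sym2 W)) {G' : SimpleGraph W} {x y : W}
    (p : G'.Walk x y) : Prop :=
  p.IsPath ∧ List.Chain' (altRel M) p.edges ∧
    (∀ e, p.edges.head? = some e → e ∉ M → ¬ Matched M x) ∧
    (∀ e, p.edges.getLast? = some e → e ∉ M → ¬ Matched M y)

/-- An alternating cycle (with respect to `M`) in a graph `G'`:
the edges alternate cyclically between `M` and non-`M`. -/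
def IsAltCycle {W : Type u} (M : Set (Sym2 W)) {G' : SimpleGraph W} {x : W}
    (p : G'.Walk x x) : Prop :=
  p.IsCycle ∧ List.Chain' (altRel M) (p.edges ++ p.edges.take 1)

/-- `l` contains at least one edge labeled `+2`. -/
def OnePlusEdge {W : Type u} (pref : W → W → ℕ) (rk : W → ℕ) (l : List (Sym2 W)) : Prop :=
  ∃ e ∈ l, EdgePlus pref rk e

/-- `l` contains at least two edges labeled `+2`. -/
def TwoPlusEdges {W : Type u} (pref : W → W → ℕ) (rk : W → ℕ) (l : List (Sym2 W)) : Prop :=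
  ∃ e ∈ l, ∃ e' ∈ l, e ≠ e' ∧ EdgePlus pref rk e ∧ EdgePlus pref rk e'

/-- A vertex cover. -/
def IsVC {V : Type u} (G : SimpleGraph V) (U : Set V) : Prop :=
  ∀ ⦃x y : V⦄, G.Adj x y → x ∈ U ∨ y ∈ U
/-- An instance of Partitioned Vertex Cover: `G` is a finite simple graph, `P` is a
collection of pairwise disjoint edges of `G`, `T` is a collection of pairwise disjoint
3-element vertex sets each inducing a triangle in `G`, and every vertex of `G` lies in
exactly one member of `P ∪ T`. -/
def IsPVC {V : Type u} (G : SimpleGraph V) (P : Set (Sym2 V)) (T : Set (Finset V)) : Prop :=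
  Finite V ∧
  P ⊆ G.edgeSet ∧
  (∀ e ∈ P, ∀ e' ∈ P, e ≠ e' → ∀ v : V, v ∈ e → v ∉ e') ∧
  (∀ t ∈ T, t.card = 3) ∧
  (∀ t ∈ T, ∀ x ∈ t, ∀ y ∈ t, x ≠ y → G.Adj x y) ∧
  (∀ t ∈ T, ∀ t' ∈ T, t ≠ t' → ∀ v : V, v ∈ t → v ∉ t') ∧
  (∀ v : V, (∃ e ∈ P, v ∈ e) ∨ (∃ t ∈ T, v ∈ t)) ∧
  (∀ v : V, ¬ ((∃ e ∈ P, v ∈ e) ∧ (∃ t ∈ T, v ∈ t)))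

/-- A solution of a Partitioned Vertex Cover instance: a vertex cover `U` with
`|U ∩ P| = 1` for every pair `P` and `|U ∩ T| = 2` for every triple `T`. -/
def IsPVCSolution {V : Type u} (G : SimpleGraph V) (P : Set (Sym2 V)) (T : Set (Finset V))
    (U : Set V) : Prop :=
  IsVC G U ∧
  (∀ e ∈ P, {x : V | x ∈ e ∧ x ∈ U}.ncard = 1) ∧
  (∀ t ∈ T, {x : V | x ∈ t ∧ x ∈ U}.ncard = 2)

/-- The vertices of the graph `H` built from a Partitioned Vertex Cover instance:
`a i`, `b i`, `c i`, `d i` for a vertex `i` of `G`; `u i j` is the vertex `u^e_i` for the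
edge `e = {i,j}` of `G`; `f i j` is the vertex `f_{ij}` for the pair `{i,j} ∈ P`. -/
inductive Gad (V : Type u) : Type u where
  | a : V → Gad V
  | b : V → Gad V
  | c : V → Gad V
  | d : V → Gad V
  | u : V → V → Gad V
  | f : V → V → Gad V
deriving DecidableEq

/-- Which formal gadget vertices are really vertices of `H`. -/
def Gad.valid {V : Type u} (G : SimpleGraph V) (P : Set (Sym2 V)) : Gad V → Prop
  | .u i j => G.Adj i j
  | .f i j => s(i, j) ∈ P
  | _ => True

/-- The edges of `H`, up to symmetry. -/
inductive HBase {V : Type u} (G : SimpleGraph V) (P : Set (Sym2 V)) (T : Set (Finset V)) :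
    Gad V → Gad V → Prop where
  | da (i : V) : HBase G P T (.d i) (.a i)
  | ab (i : V) : HBase G P T (.a i) (.b i)
  | ac (i : V) : HBase G P T (.a i) (.c i)
  | bc (i : V) : HBase G P T (.b i) (.c i)
  | uu {i j : V} (h : G.Adj i j) : HBase G P T (.u i j) (.u j i)
  | bu {i j : V} (h : G.Adj i j) : HBase G P T (.b i) (.u i j)
  | df {i j : V} (h : s(i, j) ∈ P) : HBase G P T (.d i) (.f i j)
  | fc {i j : V} (h : s(i, j) ∈ P) : HBase G P T (.f i j) (.c j)
  | cd {i j : V} (h : s(i, j) ∈ P) : HBase G P T (.c i) (.d j)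
  | dd {i j : V} {t : Finset V} (ht : t ∈ T) (hi : i ∈ t) (hj : j ∈ t) (hne : i ≠ j) :
      HBase G P T (.d i) (.d j)
  | cc {i j : V} {t : Finset V} (ht : t ∈ T) (hi : i ∈ t) (hj : j ∈ t) (hne : i ≠ j) :
      HBase G P T (.c i) (.c j)

/-- The graph `H` of the Popular Matching instance built from `(G, P, T)`. -/
def Hgraph {V : Type u} (G : SimpleGraph V) (P : Set (Sym2 V)) (T : Set (Finset V)) :
    SimpleGraph {g : Gad V // Gad.valid G P g} where
  Adj x y := x ≠ y ∧ (HBase G P T x.1 y.1 ∨ HBase G P T y.1 x.1)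
  symm := ⟨fun _ _ h => ⟨h.1.symm, h.2.symm⟩⟩
  loopless := ⟨fun _ h => h.1 rfl⟩

/-- The Popular Matching instance (graph together with preference lists) constructed
from a Partitioned Vertex Cover instance `(G, P, T)`.  The field `pref` gives the
preference lists; all its values on the neighborhoods in `H` are pinned down, except
the ranks that `b i` assigns to the vertices `u^e_i`, which form an arbitrary fixed
bijection onto `{2, …, deg_G(i) + 1}`. -/
structure Reduction (V : Type u) [LinearOrder V] : Type u where
  G : SimpleGraph V
  P : Set (Sym2 V)
  T : Set (Finset V)
  ispvc : IsPVC G P T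
  pref : Gad V → Gad V → ℕ
  pref_ab : ∀ i : V, pref (.a i) (.b i) = 1
  pref_ac : ∀ i : V, pref (.a i) (.c i) = 2
  pref_ad : ∀ i : V, pref (.a i) (.d i) = 3
  pref_ba : ∀ i : V, pref (.b i) (.a i) = 1
  pref_bu : ∀ i : V, Set.BijOn (pref (.b i)) {g : Gad V | ∃ j : V, G.Adj i j ∧ g = .u i j}
      (Set.Icc 2 ((G.neighborSet i).ncard + 1))
  pref_bc : ∀ i : V, pref (.b i) (.c i) = (G.neighborSet i).ncard + 2
  pref_ca : ∀ i : V, pref (.c i) (.a i) = 1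
  pref_cb : ∀ i : V, pref (.c i) (.b i) = 2
  pref_da : ∀ i : V, pref (.d i) (.a i) = 1
  pref_uu : ∀ i j : V, G.Adj i j → pref (.u i j) (.u j i) = 1
  pref_ub : ∀ i j : V, G.Adj i j → pref (.u i j) (.b i) = 2
  pref_cf : ∀ i j : V, s(i, j) ∈ P → pref (.c i) (.f j i) = 3
  pref_cd : ∀ i j : V, s(i, j) ∈ P → pref (.c i) (.d j) = 4
  pref_dc : ∀ i j : V, s(i, j) ∈ P → pref (.d i) (.c j) = 2
  pref_df : ∀ i j : V, s(i, j) ∈ P → pref (.d i) (.f i j) = 3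
  pref_fd : ∀ i j : V, s(i, j) ∈ P → pref (.f i j) (.d i) = 1
  pref_fc : ∀ i j : V, s(i, j) ∈ P → pref (.f i j) (.c j) = 2
  pref_tri : ∀ t ∈ T, ∀ i j k : V, t = {i, j, k} → i < j → j < k →
    pref (.c i) (.c k) = 3 ∧ pref (.c i) (.c j) = 4 ∧
    pref (.c j) (.c i) = 3 ∧ pref (.c j) (.c k) = 4 ∧
    pref (.c k) (.c j) = 3 ∧ pref (.c k) (.c i) = 4 ∧
    pref (.d i) (.d j) = 2 ∧ pref (.d i) (.d k) = 3 ∧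
    pref (.d j) (.d k) = 2 ∧ pref (.d j) (.d i) = 3 ∧
    pref (.d k) (.d i) = 2 ∧ pref (.d k) (.d j) = 3

namespace Reduction

variable {V : Type u} [LinearOrder V] (R : Reduction V)

/-- The vertex set of `H`. -/
abbrev HV : Type u := {g : Gad V // Gad.valid R.G R.P g}

/-- The graph `H`. -/
def H : SimpleGraph R.HV := Hgraph R.G R.P R.T

/-- The preference lists of `H`, as a function on its vertices. -/
def prefH : R.HV → R.HV → ℕ := fun x y => R.pref x.1 y.1

/-- The vertex `a_i` of `H`. -/
def va (i : V) : R.HV := ⟨.a i, trivial⟩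
/-- The vertex `b_i` of `H`. -/
def vb (i : V) : R.HV := ⟨.b i, trivial⟩
/-- The vertex `c_i` of `H`. -/
def vc (i : V) : R.HV := ⟨.c i, trivial⟩
/-- The vertex `d_i` of `H`. -/
def vd (i : V) : R.HV := ⟨.d i, trivial⟩
/-- The vertex `u^e_i` of `H`, for an edge `e = {i,j}` of `G`. -/
def vu (i j : V) (h : R.G.Adj i j) : R.HV := ⟨.u i j, h⟩
/-- The vertex `f_{ij}` of `H`, for a pair `{i,j} ∈ P`. -/
def vf (i j : V) (h : s(i, j) ∈ R.P) : R.HV := ⟨.f i j, h⟩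

/-- The matching `M*` in `H` constructed from a solution `U`. -/
def Mstar (U : Set V) : Set (Sym2 R.HV) :=
  {e : Sym2 R.HV |
    (∃ (i j : V) (h : R.G.Adj i j), e = s(R.vu i j h, R.vu j i h.symm)) ∨
    (∃ (x y : V) (h : s(x, y) ∈ R.P) (h' : s(y, x) ∈ R.P), x ∉ U ∧ y ∈ U ∧
      (e = s(R.va x, R.vd x) ∨ e = s(R.vb x, R.vc x) ∨ e = s(R.va y, R.vb y) ∨
       e = s(R.vf x y h, R.vc y) ∨ e = s(R.vf y x h', R.vd y))) ∨
    (∃ t ∈ R.T, ∃ x y z : V, t = {x, y, z} ∧ x ∉ U ∧ y ∈ U ∧ z ∈ U ∧ y ≠ z ∧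
      R.pref (.d x) (.d y) < R.pref (.d x) (.d z) ∧
      (e = s(R.va x, R.vd x) ∨ e = s(R.vb x, R.vc x) ∨ e = s(R.va y, R.vb y) ∨
       e = s(R.va z, R.vb z) ∨ e = s(R.vc y, R.vc z) ∨ e = s(R.vd y, R.vd z)))}

end Reduction

/-- The vertex set of the Pair Selector gadget associated with a pair `{i,j}`. -/
def pairGadget {V : Type u} (i j : V) : Set (Gad V) :=
  {g : Gad V | ∃ x : V, (x = i ∨ x = j) ∧ (g = .a x ∨ g = .b x ∨ g = .c x ∨ g = .d x)} ∪
    {Gad.f i j, Gad.f j i}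

/-- The vertex set of the Triple Selector gadget associated with a triple `t`. -/
def tripleGadget {V : Type u} (t : Finset V) : Set (Gad V) :=
  {g : Gad V | ∃ x ∈ t, g = .a x ∨ g = .b x ∨ g = .c x ∨ g = .d x}


/-!
In a popular matching `M` of `H` every `a_i` is matched, since otherwise `a_i b_i` could be added
with only the old partner of `b_i` objecting; and never to `c_i`, since then `a_i` could move to
`b_i` and the `u`-partner of `b_i` to its twin. So `a_i` is matched to `b_i` or to `d_i`. For a
pair `{i, j}`, if both `a_i` and `a_j` take their `b`, the vertices `c_i, f_ji, d_j` can only be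
matched among themselves, and their preferences are cyclic, which no popular matching survives.
If both take their `d`, moving `a_i` to `c_i` and `d_i` to `f_ij` (and `a_j` to `c_j` when `f_ij`
was matched to `c_j`) makes more vertices better off than worse off.
-/

theorem Sym2.ncard_setOf_mem_and_eq_one {α : Type*} {p : α → Prop} {i j : α}
    (h : p i ↔ ¬ p j) : {x | x ∈ s(i, j) ∧ p x}.ncard = 1 := by
  rw [Set.ncard_eq_one]
  by_cases hi : p i
  · refine ⟨i, Set.ext fun x => ⟨?_, ?_⟩⟩
    · rintro ⟨hx, hpx⟩
      rcases Sym2.mem_iff.mp hx with rfl | rfl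
      exacts [rfl, (h.mp hi hpx).elim]
    · rintro rfl
      exact ⟨Sym2.mem_mk_left _ _, hi⟩
  · refine ⟨j, Set.ext fun x => ⟨?_, ?_⟩⟩
    · rintro ⟨hx, hpx⟩
      rcases Sym2.mem_iff.mp hx with rfl | rfl
      exacts [(hi hpx).elim, rfl]
    · rintro rfl
      exact ⟨Sym2.mem_mk_right _ _, not_not.mp (mt h.mpr hi)⟩

section Popularity

variable {W : Type*} {G : SimpleGraph W} {pref : W → W → ℕ} {M M' A : Set (Sym2 W)}
  {e e' : Sym2 W} {v w p x y z : W}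

theorem mk_mem_comm : s(x, y) ∈ M ↔ s(y, x) ∈ M := by rw [Sym2.eq_swap]

theorem IsMatching.eq_of_mem (hM : IsMatching G M) (he : e ∈ M) (he' : e' ∈ M)
    (hv : v ∈ e) (hv' : v ∈ e') : e = e' :=
  by_contra fun hne => hM.2 e he e' he' hne v hv hv'

theorem IsMatching.eq_of_mk_mem (hM : IsMatching G M) (hx : s(v, x) ∈ M) (hy : s(v, y) ∈ M) :
    x = y :=
  Sym2.congr_right.mp (hM.eq_of_mem hx hy (Sym2.mem_mk_left _ _) (Sym2.mem_mk_left _ _))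

theorem IsMatching.forall_partner (hM : IsMatching G M) (h : s(v, p) ∈ M) {q : W → Prop}
    (hp : q p) : ∀ w, s(v, w) ∈ M → q w :=
  fun _ hw => hM.eq_of_mk_mem h hw ▸ hp

theorem IsMatching.adj (hM : IsMatching G M) (h : s(x, y) ∈ M) : G.Adj x y := hM.1 h

theorem isMatching_singleton (h : G.Adj x y) : IsMatching G {s(x, y)} := by
  refine ⟨by simpa using h, ?_⟩
  rintro e rfl e' rfl hne
  exact absurd rfl hne

theorem IsMatching.insert (hA : IsMatching G A) (h : G.Adj x y) (hx : ∀ f ∈ A, x ∉ f)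
    (hy : ∀ f ∈ A, y ∉ f) : IsMatching G (insert s(x, y) A) := by
  have hxy : ∀ f ∈ A, ∀ u ∈ s(x, y), u ∉ f := fun f hf u hu => by
    rcases Sym2.mem_iff.mp hu with rfl | rfl
    exacts [hx f hf, hy f hf]
  refine ⟨Set.insert_subset h hA.1, ?_⟩
  rintro e (rfl | he) e' (rfl | he') hne u hu hu'
  · exact hne rfl
  · exact hxy e' he' u hu hu'
  · exact hxy e he u hu' hu
  · exact hA.2 e he e' he' hne u hu hu'

theorem rank_of_mem (hM : IsMatching G M) (h : s(v, w) ∈ M) : rank G pref M v = pref v w := by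
  have hv : ∃ x, s(v, x) ∈ M := ⟨w, h⟩
  rw [rank, dif_pos hv, hM.eq_of_mk_mem hv.choose_spec h]

theorem rank_of_not_matched (h : ¬ Matched M v) :
    rank G pref M v = (G.neighborSet v).ncard + 1 :=
  dif_neg h

theorem lt_rank {k : ℕ} (hk : k ≤ (G.neighborSet v).ncard)
    (h : ∀ w, s(v, w) ∈ M → k < pref v w) : k < rank G pref M v := by
  unfold rank
  split_ifs with hv
  · exact h _ hv.choose_spec
  · omega

theorem one_lt_rank_of_not_matched [Finite W] (hvw : G.Adj v w) (h : ¬ Matched M v) :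
    1 < rank G pref M v :=
  lt_rank ((Set.ncard_pos).mpr ⟨w, hvw⟩) fun w hw => (h ⟨w, hw⟩).elim

theorem rank_congr (hM : IsMatching G M) (hM' : IsMatching G M')
    (h : ∀ w, s(v, w) ∈ M ↔ s(v, w) ∈ M') : rank G pref M v = rank G pref M' v := by
  by_cases hv : Matched M v
  · obtain ⟨w, hw⟩ := hv
    rw [rank_of_mem hM hw, rank_of_mem hM' ((h w).mp hw)]
  · have hv' : ¬ Matched M' v := fun ⟨w, hw⟩ => hv ⟨w, (h w).mpr hw⟩
    rw [rank_of_not_matched hv, rank_of_not_matched hv']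

theorem length_le_ncard_neighborSet [Finite W] {L : List W} (hL : L.Nodup)
    (h : L.Forall (G.Adj v)) : L.length ≤ (G.neighborSet v).ncard := by
  classical
  rw [← List.toFinset_card_of_nodup hL, ← Set.ncard_coe_finset]
  exact Set.ncard_le_ncard fun w hw => List.forall_iff_forall_mem.mp h w (List.mem_toFinset.mp hw)

/-- `M'` gets at least `|I|` votes and `M` at most `|J|`. -/
theorem IsPopular.false_of_better [Finite W] (hpop : IsPopular G pref M)
    (hM' : IsMatching G M') {I J : Set W} (hI : ∀ v ∈ I, rank G pref M' v < rank G pref M v)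
    (hJ : ∀ v ∉ I, v ∉ J → ∀ w, s(v, w) ∈ M ↔ s(v, w) ∈ M') (hcard : J.ncard < I.ncard) :
    False := by
  have hgain : I.ncard ≤ vote G pref M' M := Set.ncard_le_ncard hI
  have hloss : vote G pref M M' ≤ J.ncard := Set.ncard_le_ncard fun v hv => by
    by_contra hvJ
    have hvI : v ∉ I := fun hvI => lt_asymm hv (hI v hvI)
    exact (rank_congr hpop.1 hM' (hJ v hvI hvJ)).not_lt hv
  have := hpop.2 M' hM'
  omega

def replaceEdges (M A : Set (Sym2 W)) : Set (Sym2 W) := {e ∈ M | ∀ f ∈ A, ∀ v ∈ e, v ∉ f} ∪ A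

theorem IsMatching.replaceEdges (hM : IsMatching G M) (hA : IsMatching G A) :
    IsMatching G (replaceEdges M A) := by
  refine ⟨Set.union_subset (fun e he => hM.1 he.1) hA.1, ?_⟩
  rintro e (⟨he, hdisj⟩ | he) e' (⟨he', hdisj'⟩ | he') hne u hu hu'
  · exact hM.2 e he e' he' hne u hu hu'
  · exact hdisj e' he' u hu hu'
  · exact hdisj' e he u hu' hu
  · exact hA.2 e he e' he' hne u hu hu'

theorem rank_replaceEdges_of_mem (hM : IsMatching G M) (hA : IsMatching G A)
    (h : s(v, w) ∈ A) : rank G pref (replaceEdges M A) v = pref v w :=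
  rank_of_mem (hM.replaceEdges hA) (Or.inr h)

/-- The vertices whose partner changes in `replaceEdges M A` are those covered by `A` and their
`M`-partners. -/
theorem IsPopular.false_of_replaceEdges [Finite W] (hpop : IsPopular G pref M)
    (hA : IsMatching G A) {I J : List W} (hI : I.Nodup)
    (hbetter : ∀ v ∈ I, rank G pref (replaceEdges M A) v < rank G pref M v)
    (hcov : ∀ f ∈ A, ∀ v ∈ f, v ∈ I ∨ v ∈ J)
    (hnbr : ∀ f ∈ A, ∀ v ∈ f, ∀ w, s(v, w) ∈ M → w ∈ I ∨ w ∈ J)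
    (hlen : J.length < I.length) : False := by
  classical
  refine hpop.false_of_better (hpop.1.replaceEdges hA) (I := {v | v ∈ I}) (J := {v | v ∈ J})
    hbetter (fun v hvI hvJ w => ⟨fun h => Or.inl ⟨h, fun f hf u hu huf => ?_⟩, ?_⟩) ?_
  · rcases Sym2.mem_iff.mp hu with rfl | rfl
    · exact absurd (hcov f hf u huf) (not_or.mpr ⟨hvI, hvJ⟩)
    · exact absurd (hnbr f hf u huf v (mk_mem_comm.mp h)) (not_or.mpr ⟨hvI, hvJ⟩)
  · rintro (⟨h, -⟩ | h)
    · exact h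
    · exact absurd (hcov _ h v (Sym2.mem_mk_left _ _)) (not_or.mpr ⟨hvI, hvJ⟩)
  · rw [← List.coe_toFinset, ← List.coe_toFinset, Set.ncard_coe_finset, Set.ncard_coe_finset,
      List.toFinset_card_of_nodup hI]
    exact (List.toFinset_card_le J).trans_lt hlen

/-- Matching `x` to `y`, both gain and only the old partner of `y` loses. -/
theorem IsPopular.false_of_blocking [Finite W] (hpop : IsPopular G pref M) (hxy : G.Adj x y)
    (hx : ¬ Matched M x) (hxr : pref x y < rank G pref M x)
    (hyr : pref y x < rank G pref M y) : False := by
  have hA := isMatching_singleton hxy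
  have key (J : List W) (hJ : J.length ≤ 1) (hyJ : ∀ w, s(y, w) ∈ M → w ∈ J) : False := by
    refine hpop.false_of_replaceEdges hA (I := [x, y]) (J := J) (by simp [hxy.ne]) ?_ ?_ ?_
      (Nat.lt_succ_of_le hJ)
    · simp only [List.mem_cons, List.not_mem_nil, or_false, forall_eq_or_imp, forall_eq]
      rw [rank_replaceEdges_of_mem hpop.1 hA rfl,
        rank_replaceEdges_of_mem hpop.1 hA Sym2.eq_swap]
      exact ⟨hxr, hyr⟩
    · rintro f rfl u hu
      rcases Sym2.mem_iff.mp hu with rfl | rfl <;> simp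
    · rintro f rfl u hu w hw
      rcases Sym2.mem_iff.mp hu with rfl | rfl
      · exact (hx ⟨w, hw⟩).elim
      · exact Or.inr (hyJ w hw)
  by_cases hy : Matched M y
  · obtain ⟨p, hp⟩ := hy
    exact key [p] le_rfl fun w hw => by simp [hpop.1.eq_of_mk_mem hw hp]
  · exact key [] (by simp) fun w hw => (hy ⟨w, hw⟩).elim

theorem IsPopular.false_of_mem_of_prefers [Finite W] (hpop : IsPopular G pref M)
    (hxy : s(x, y) ∈ M) (hyz : G.Adj y z) (hz : ∀ w, s(z, w) ∈ M → w = x ∨ w = y)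
    (hyp : pref y z < pref y x) (hzN : pref z y ≤ (G.neighborSet z).ncard) : False := by
  have hM := hpop.1
  have hZ : ¬ Matched M z := by
    rintro ⟨w, hw⟩
    rcases hz w hw with rfl | rfl
    · exact hyz.ne (hM.eq_of_mk_mem hxy (mk_mem_comm.mp hw))
    · obtain rfl := hM.eq_of_mk_mem (mk_mem_comm.mp hxy) (mk_mem_comm.mp hw)
      exact lt_irrefl _ hyp
  refine hpop.false_of_blocking hyz.symm hZ ?_ ?_
  · rw [rank_of_not_matched hZ]
    omega
  · rwa [rank_of_mem hM (mk_mem_comm.mp hxy)]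

/-- Whichever edge of the triangle `M` uses, the third vertex and its preferred neighbour block
it. -/
theorem IsPopular.false_of_cyclic_triangle [Finite W] (hpop : IsPopular G pref M)
    (hxy : G.Adj x y) (hyz : G.Adj y z) (hzx : G.Adj z x)
    (hx : ∀ w, s(x, w) ∈ M → w = y ∨ w = z) (hy : ∀ w, s(y, w) ∈ M → w = z ∨ w = x)
    (hz : ∀ w, s(z, w) ∈ M → w = x ∨ w = y)
    (hxp : pref x y < pref x z) (hyp : pref y z < pref y x) (hzp : pref z x < pref z y)
    (hxN : pref x z ≤ (G.neighborSet x).ncard) (hyN : pref y x ≤ (G.neighborSet y).ncard)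
    (hzN : pref z y ≤ (G.neighborSet z).ncard) : False := by
  by_cases hX : Matched M x
  · obtain ⟨w, hw⟩ := hX
    rcases hx w hw with rfl | rfl
    · exact hpop.false_of_mem_of_prefers hw hyz hz hyp hzN
    · exact hpop.false_of_mem_of_prefers (mk_mem_comm.mp hw) hxy hy hxp hyN
  by_cases hY : Matched M y
  · obtain ⟨w, hw⟩ := hY
    rcases hy w hw with rfl | rfl
    · exact hpop.false_of_mem_of_prefers hw hzx hx hzp hxN
    · exact hX ⟨y, mk_mem_comm.mp hw⟩
  refine hpop.false_of_blocking hxy hX ?_ ?_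
  · rw [rank_of_not_matched hX]
    omega
  · rw [rank_of_not_matched hY]
    omega

end Popularity

instance Gad.instFinite {V : Type u} [Finite V] : Finite (Gad V) := by
  refine Finite.of_injective (fun g : Gad V => match g with
    | .a i => ((0 : Fin 6), i, i) | .b i => (1, i, i) | .c i => (2, i, i)
    | .d i => (3, i, i) | .u i j => (4, i, j) | .f i j => (5, i, j)) fun g g' h => ?_
  cases g <;> cases g' <;> simp_all

namespace Reduction

variable {V : Type u} [LinearOrder V] (R : Reduction V) {i j k : V} {M : Set (Sym2 R.HV)}

@[simp] theorem val_va : (R.va i).1 = .a i := rfl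
@[simp] theorem val_vb : (R.vb i).1 = .b i := rfl
@[simp] theorem val_vc : (R.vc i).1 = .c i := rfl
@[simp] theorem val_vd : (R.vd i).1 = .d i := rfl
@[simp] theorem val_vu (hk : R.G.Adj i k) : (R.vu i k hk).1 = .u i k := rfl
@[simp] theorem val_vf (hp : s(i, j) ∈ R.P) : (R.vf i j hp).1 = .f i j := rfl

instance finite_HV : Finite R.HV :=
  have := R.ispvc.1
  Subtype.finite

theorem pair_adj (h : s(i, j) ∈ R.P) : R.G.Adj i j := by
  obtain ⟨-, hPG, -⟩ := R.ispvc
  exact hPG h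

theorem pair_symm (h : s(i, j) ∈ R.P) : s(j, i) ∈ R.P := Sym2.eq_swap ▸ h

theorem pair_unique (hp : s(i, j) ∈ R.P) (h : s(i, k) ∈ R.P) : k = j := by
  obtain ⟨-, -, hPdisj, -⟩ := R.ispvc
  by_contra hne
  exact hPdisj _ h _ hp (fun he => hne (Sym2.congr_right.mp he)) i (Sym2.mem_mk_left i k)
    (Sym2.mem_mk_left i j)

theorem not_mem_triple_of_pair (hp : s(i, j) ∈ R.P) {t : Finset V} (ht : t ∈ R.T) :
    i ∉ t := by
  obtain ⟨-, -, -, -, -, -, -, hPT⟩ := R.ispvc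
  exact fun hi => hPT i ⟨⟨_, hp, Sym2.mem_mk_left i j⟩, t, ht, hi⟩

theorem H_adj_iff {x y : R.HV} :
    R.H.Adj x y ↔ x ≠ y ∧ (HBase R.G R.P R.T x.1 y.1 ∨ HBase R.G R.P R.T y.1 x.1) :=
  Iff.rfl

theorem adj_va_cases {x : R.HV} (h : R.H.Adj (R.va i) x) :
    x = R.vb i ∨ x = R.vc i ∨ x = R.vd i := by
  obtain ⟨g, hg⟩ := x
  obtain ⟨-, h | h⟩ := R.H_adj_iff.mp h
  · cases h with
    | ab => exact Or.inl rfl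
    | ac => exact Or.inr (Or.inl rfl)
  · cases h with
    | da => exact Or.inr (Or.inr rfl)

theorem adj_vb_cases {x : R.HV} (h : R.H.Adj (R.vb i) x) :
    x = R.va i ∨ x = R.vc i ∨ ∃ (k : V) (hk : R.G.Adj i k), x = R.vu i k hk := by
  obtain ⟨g, hg⟩ := x
  obtain ⟨-, h | h⟩ := R.H_adj_iff.mp h
  · cases h with
    | bc => exact Or.inr (Or.inl rfl)
    | bu hk => exact Or.inr (Or.inr ⟨_, hk, rfl⟩)
  · cases h with
    | ab => exact Or.inl rfl

theorem adj_vc_cases (hp : s(i, j) ∈ R.P) {x : R.HV} (h : R.H.Adj (R.vc i) x) :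
    x = R.va i ∨ x = R.vb i ∨ x = R.vd j ∨ x = R.vf j i (R.pair_symm hp) := by
  obtain ⟨g, hg⟩ := x
  obtain ⟨-, h | h⟩ := R.H_adj_iff.mp h
  · cases h with
    | cd h' =>
      obtain rfl := R.pair_unique hp h'
      exact Or.inr (Or.inr (Or.inl rfl))
    | cc ht hi => exact (R.not_mem_triple_of_pair hp ht hi).elim
  · cases h with
    | ac => exact Or.inl rfl
    | bc => exact Or.inr (Or.inl rfl)
    | fc h' =>
      obtain rfl := R.pair_unique hp (R.pair_symm h')
      exact Or.inr (Or.inr (Or.inr rfl))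
    | cc ht _ hj => exact (R.not_mem_triple_of_pair hp ht hj).elim

theorem adj_vd_cases (hp : s(i, j) ∈ R.P) {x : R.HV} (h : R.H.Adj (R.vd i) x) :
    x = R.va i ∨ x = R.vc j ∨ x = R.vf i j hp := by
  obtain ⟨g, hg⟩ := x
  obtain ⟨-, h | h⟩ := R.H_adj_iff.mp h
  · cases h with
    | da => exact Or.inl rfl
    | df h' =>
      obtain rfl := R.pair_unique hp h'
      exact Or.inr (Or.inr rfl)
    | dd ht hi => exact (R.not_mem_triple_of_pair hp ht hi).elim
  · cases h with
    | cd h' =>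
      obtain rfl := R.pair_unique hp (R.pair_symm h')
      exact Or.inr (Or.inl rfl)
    | dd ht _ hj => exact (R.not_mem_triple_of_pair hp ht hj).elim

theorem adj_vf_cases (hp : s(i, j) ∈ R.P) {x : R.HV} (h : R.H.Adj (R.vf i j hp) x) :
    x = R.vd i ∨ x = R.vc j := by
  obtain ⟨g, hg⟩ := x
  obtain ⟨-, h | h⟩ := R.H_adj_iff.mp h
  · cases h with
    | fc => exact Or.inr rfl
  · cases h with
    | df => exact Or.inl rfl

theorem adj_vu_cases (hk : R.G.Adj i k) {x : R.HV} (h : R.H.Adj (R.vu i k hk) x) :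
    x = R.vb i ∨ x = R.vu k i hk.symm := by
  obtain ⟨g, hg⟩ := x
  obtain ⟨-, h | h⟩ := R.H_adj_iff.mp h
  · cases h with
    | uu => exact Or.inr rfl
  · cases h with
    | uu => exact Or.inr rfl
    | bu => exact Or.inl rfl

theorem adj_va_vb (i : V) : R.H.Adj (R.va i) (R.vb i) :=
  R.H_adj_iff.mpr ⟨by simp [Subtype.ext_iff], Or.inl (HBase.ab i)⟩

theorem adj_va_vc (i : V) : R.H.Adj (R.va i) (R.vc i) :=
  R.H_adj_iff.mpr ⟨by simp [Subtype.ext_iff], Or.inl (HBase.ac i)⟩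

theorem adj_vd_va (i : V) : R.H.Adj (R.vd i) (R.va i) :=
  R.H_adj_iff.mpr ⟨by simp [Subtype.ext_iff], Or.inl (HBase.da i)⟩

theorem adj_vc_vb (i : V) : R.H.Adj (R.vc i) (R.vb i) :=
  R.H_adj_iff.mpr ⟨by simp [Subtype.ext_iff], Or.inr (HBase.bc i)⟩

theorem adj_vu_vu (hk : R.G.Adj i k) : R.H.Adj (R.vu i k hk) (R.vu k i hk.symm) :=
  R.H_adj_iff.mpr ⟨by simp [Subtype.ext_iff, hk.ne], Or.inl (HBase.uu hk)⟩

theorem adj_vd_vf (hp : s(i, j) ∈ R.P) : R.H.Adj (R.vd i) (R.vf i j hp) :=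
  R.H_adj_iff.mpr ⟨by simp [Subtype.ext_iff], Or.inl (HBase.df hp)⟩

theorem adj_vf_vc (hp : s(i, j) ∈ R.P) : R.H.Adj (R.vf i j hp) (R.vc j) :=
  R.H_adj_iff.mpr ⟨by simp [Subtype.ext_iff], Or.inl (HBase.fc hp)⟩

theorem adj_vc_vd (hp : s(i, j) ∈ R.P) : R.H.Adj (R.vc i) (R.vd j) :=
  R.H_adj_iff.mpr ⟨by simp [Subtype.ext_iff], Or.inl (HBase.cd hp)⟩

@[simp] theorem prefH_va_vb : R.prefH (R.va i) (R.vb i) = 1 := R.pref_ab i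
@[simp] theorem prefH_va_vc : R.prefH (R.va i) (R.vc i) = 2 := R.pref_ac i
@[simp] theorem prefH_va_vd : R.prefH (R.va i) (R.vd i) = 3 := R.pref_ad i
@[simp] theorem prefH_vb_va : R.prefH (R.vb i) (R.va i) = 1 := R.pref_ba i
@[simp] theorem prefH_vc_va : R.prefH (R.vc i) (R.va i) = 1 := R.pref_ca i
@[simp] theorem prefH_vc_vb : R.prefH (R.vc i) (R.vb i) = 2 := R.pref_cb i

@[simp] theorem prefH_vu_vu (hk : R.G.Adj i k) : R.prefH (R.vu i k hk) (R.vu k i hk.symm) = 1 :=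
  R.pref_uu i k hk

@[simp] theorem prefH_vu_vb (hk : R.G.Adj i k) : R.prefH (R.vu i k hk) (R.vb i) = 2 :=
  R.pref_ub i k hk

@[simp] theorem prefH_vc_vf (hp : s(j, i) ∈ R.P) : R.prefH (R.vc i) (R.vf j i hp) = 3 :=
  R.pref_cf i j (R.pair_symm hp)

@[simp] theorem prefH_vc_vd (hp : s(i, j) ∈ R.P) : R.prefH (R.vc i) (R.vd j) = 4 :=
  R.pref_cd i j hp

@[simp] theorem prefH_vd_vc (hp : s(i, j) ∈ R.P) : R.prefH (R.vd i) (R.vc j) = 2 :=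
  R.pref_dc i j hp

@[simp] theorem prefH_vd_vf (hp : s(i, j) ∈ R.P) : R.prefH (R.vd i) (R.vf i j hp) = 3 :=
  R.pref_df i j hp

@[simp] theorem prefH_vf_vd (hp : s(i, j) ∈ R.P) : R.prefH (R.vf i j hp) (R.vd i) = 1 :=
  R.pref_fd i j hp

@[simp] theorem prefH_vf_vc (hp : s(i, j) ∈ R.P) : R.prefH (R.vf i j hp) (R.vc j) = 2 :=
  R.pref_fc i j hp

theorem one_lt_prefH_vb {x : R.HV} (h : R.H.Adj (R.vb i) x) (hx : x ≠ R.va i) :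
    1 < R.prefH (R.vb i) x := by
  rcases R.adj_vb_cases h with rfl | rfl | ⟨k, hk, rfl⟩
  · exact (hx rfl).elim
  · simp [prefH, R.pref_bc]
  · exact (Set.mem_Icc.mp ((R.pref_bu i).mapsTo ⟨k, hk, rfl⟩)).1

theorem one_lt_prefH_vc (hp : s(i, j) ∈ R.P) {x : R.HV} (h : R.H.Adj (R.vc i) x)
    (hx : x ≠ R.va i) : 1 < R.prefH (R.vc i) x := by
  rcases R.adj_vc_cases hp h with rfl | rfl | rfl | rfl <;> simp_all [Subtype.ext_iff]

theorem four_le_ncard_neighborSet_vc (hp : s(i, j) ∈ R.P) :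
    4 ≤ (R.H.neighborSet (R.vc i)).ncard :=
  length_le_ncard_neighborSet (L := [R.va i, R.vb i, R.vd j, R.vf j i (R.pair_symm hp)])
    (by simp [Subtype.ext_iff])
    ⟨(R.adj_va_vc i).symm, R.adj_vc_vb i, R.adj_vc_vd hp, (R.adj_vf_vc _).symm⟩

theorem three_le_ncard_neighborSet_vd (hp : s(i, j) ∈ R.P) :
    3 ≤ (R.H.neighborSet (R.vd i)).ncard :=
  length_le_ncard_neighborSet (L := [R.va i, R.vc j, R.vf i j hp]) (by simp [Subtype.ext_iff])
    ⟨R.adj_vd_va i, (R.adj_vc_vd (R.pair_symm hp)).symm, R.adj_vd_vf hp⟩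

theorem two_le_ncard_neighborSet_vf (hp : s(i, j) ∈ R.P) :
    2 ≤ (R.H.neighborSet (R.vf i j hp)).ncard :=
  length_le_ncard_neighborSet (L := [R.vd i, R.vc j]) (by simp [Subtype.ext_iff])
    ⟨(R.adj_vd_vf hp).symm, R.adj_vf_vc hp⟩

theorem matched_va (hpop : IsPopular R.H R.prefH M) (i : V) : Matched M (R.va i) := by
  by_contra ha
  refine hpop.false_of_blocking (R.adj_va_vb i) ha ?_ ?_
  · rw [prefH_va_vb]
    exact one_lt_rank_of_not_matched (R.adj_va_vb i) ha
  · rw [prefH_vb_va]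
    exact lt_rank ((Set.ncard_pos).mpr ⟨_, (R.adj_va_vb i).symm⟩) fun w hw =>
      R.one_lt_prefH_vb (hpop.1.adj hw) (by rintro rfl; exact ha ⟨_, mk_mem_comm.mp hw⟩)

theorem false_of_va_vc_mem_of_vb_vu_mem (hpop : IsPopular R.H R.prefH M)
    (hac : s(R.va i, R.vc i) ∈ M) (hk : R.G.Adj i k) (hx : s(R.vb i, R.vu i k hk) ∈ M) :
    False := by
  have hM := hpop.1
  have hA : IsMatching R.H {s(R.va i, R.vb i), s(R.vu i k hk, R.vu k i hk.symm)} :=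
    (isMatching_singleton (R.adj_vu_vu hk)).insert (R.adj_va_vb i) (by simp [Subtype.ext_iff])
      (by simp [Subtype.ext_iff])
  refine hpop.false_of_replaceEdges hA (I := [R.va i, R.vb i, R.vu i k hk, R.vu k i hk.symm])
    (J := [R.vc i, R.vb k]) (by simp [Subtype.ext_iff, hk.ne]) ?_ ?_ ?_ (by simp)
  · simp only [List.mem_cons, List.not_mem_nil, or_false, forall_eq_or_imp, forall_eq]
    refine ⟨?_, ?_, ?_, ?_⟩
    · simp [rank_replaceEdges_of_mem hM hA (Or.inl rfl), rank_of_mem hM hac]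
    · rw [rank_replaceEdges_of_mem hM hA (Or.inl Sym2.eq_swap), rank_of_mem hM hx, prefH_vb_va]
      exact R.one_lt_prefH_vb (hM.adj hx) (by simp [Subtype.ext_iff])
    · simp [rank_replaceEdges_of_mem hM hA (Or.inr rfl), rank_of_mem hM (mk_mem_comm.mp hx)]
    · rw [rank_replaceEdges_of_mem hM hA (Or.inr Sym2.eq_swap), prefH_vu_vu]
      refine lt_rank ((Set.ncard_pos).mpr ⟨_, (R.adj_vu_vu hk).symm⟩) fun w hw => ?_
      rcases R.adj_vu_cases hk.symm (hM.adj hw) with rfl | rfl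
      · simp
      · simpa [Subtype.ext_iff] using hM.eq_of_mk_mem (mk_mem_comm.mp hw) (mk_mem_comm.mp hx)
  · rintro f (rfl | rfl) v hv <;> rcases Sym2.mem_iff.mp hv with rfl | rfl <;> simp
  · rintro f (rfl | rfl) v hv <;> rcases Sym2.mem_iff.mp hv with rfl | rfl
    · exact hM.forall_partner hac (by simp)
    · exact hM.forall_partner hx (by simp)
    · exact hM.forall_partner (mk_mem_comm.mp hx) (by simp)
    · intro w hw
      rcases R.adj_vu_cases hk.symm (hM.adj hw) with rfl | rfl <;> simp

theorem va_vc_not_mem (hpop : IsPopular R.H R.prefH M) (i : V) : s(R.va i, R.vc i) ∉ M := by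
  intro hac
  have hM := hpop.1
  by_cases hb : Matched M (R.vb i)
  · obtain ⟨x, hx⟩ := hb
    rcases R.adj_vb_cases (hM.adj hx) with rfl | rfl | ⟨k, hk, rfl⟩
    · simpa [Subtype.ext_iff] using hM.eq_of_mk_mem (mk_mem_comm.mp hx) hac
    · simpa [Subtype.ext_iff] using hM.eq_of_mk_mem (mk_mem_comm.mp hx) (mk_mem_comm.mp hac)
    · exact R.false_of_va_vc_mem_of_vb_vu_mem hpop hac hk hx
  · refine hpop.false_of_blocking (R.adj_va_vb i).symm hb ?_ ?_
    · rw [prefH_vb_va]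
      exact one_lt_rank_of_not_matched (R.adj_va_vb i).symm hb
    · simp [rank_of_mem hM hac]

theorem not_va_vb_mem_and_va_vb_mem (hpop : IsPopular R.H R.prefH M) (hp : s(i, j) ∈ R.P)
    (hbi : s(R.va i, R.vb i) ∈ M) (hbj : s(R.va j, R.vb j) ∈ M) : False := by
  have hM := hpop.1
  have hp' := R.pair_symm hp
  refine hpop.false_of_cyclic_triangle (R.adj_vf_vc hp').symm (R.adj_vd_vf hp').symm
    (R.adj_vc_vd hp).symm (fun w hw => ?_) (fun w hw => R.adj_vf_cases hp' (hM.adj hw)) ?_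
    (by simp [hp]) (by simp) (by simp [hp']) (by simpa [hp] using R.four_le_ncard_neighborSet_vc hp)
    (by simpa using R.two_le_ncard_neighborSet_vf hp')
    (by simpa using R.three_le_ncard_neighborSet_vd hp')
  · rcases R.adj_vc_cases hp (hM.adj hw) with rfl | rfl | h | h
    · simpa [Subtype.ext_iff] using hM.eq_of_mk_mem (mk_mem_comm.mp hw) hbi
    · simpa [Subtype.ext_iff] using hM.eq_of_mk_mem (mk_mem_comm.mp hw) (mk_mem_comm.mp hbi)
    exacts [Or.inr h, Or.inl h]
  · intro w hw
    rcases R.adj_vd_cases hp' (hM.adj hw) with rfl | h | h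
    · simpa [Subtype.ext_iff] using hM.eq_of_mk_mem (mk_mem_comm.mp hw) hbj
    exacts [Or.inl h, Or.inr h]

theorem false_of_va_vd_mem_of_vf_not_matched (hpop : IsPopular R.H R.prefH M)
    (hp : s(i, j) ∈ R.P) (hdi : s(R.va i, R.vd i) ∈ M) {z : R.HV} (hz : s(R.vc i, z) ∈ M)
    (hcz : 1 < R.prefH (R.vc i) z) (hF : ¬ Matched M (R.vf i j hp)) : False := by
  have hM := hpop.1
  have hA : IsMatching R.H {s(R.va i, R.vc i), s(R.vd i, R.vf i j hp)} :=
    (isMatching_singleton (R.adj_vd_vf hp)).insert (R.adj_va_vc i) (by simp [Subtype.ext_iff])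
      (by simp [Subtype.ext_iff])
  refine hpop.false_of_replaceEdges hA (I := [R.va i, R.vc i, R.vf i j hp])
    (J := [R.vd i, z]) (by simp [Subtype.ext_iff]) ?_ ?_ ?_ (by simp)
  · simp only [List.mem_cons, List.not_mem_nil, or_false, forall_eq_or_imp, forall_eq]
    refine ⟨?_, ?_, ?_⟩
    · simp [rank_replaceEdges_of_mem hM hA (Or.inl rfl), rank_of_mem hM hdi]
    · rwa [rank_replaceEdges_of_mem hM hA (Or.inl Sym2.eq_swap), rank_of_mem hM hz, prefH_vc_va]
    · rw [rank_replaceEdges_of_mem hM hA (Or.inr Sym2.eq_swap), R.prefH_vf_vd hp]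
      exact one_lt_rank_of_not_matched (R.adj_vd_vf hp).symm hF
  · rintro f (rfl | rfl) v hv <;> rcases Sym2.mem_iff.mp hv with rfl | rfl <;> simp
  · rintro f (rfl | rfl) v hv <;> rcases Sym2.mem_iff.mp hv with rfl | rfl
    · exact hM.forall_partner hdi (by simp)
    · exact hM.forall_partner hz (by simp)
    · exact hM.forall_partner (mk_mem_comm.mp hdi) (by simp)
    · exact fun w hw => (hF ⟨w, hw⟩).elim

theorem false_of_va_vd_mem_of_vf_vc_mem (hpop : IsPopular R.H R.prefH M) (hp : s(i, j) ∈ R.P)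
    (hdi : s(R.va i, R.vd i) ∈ M) (hdj : s(R.va j, R.vd j) ∈ M) {z : R.HV}
    (hz : s(R.vc i, z) ∈ M) (hcz : 1 < R.prefH (R.vc i) z)
    (hfc : s(R.vf i j hp, R.vc j) ∈ M) : False := by
  have hM := hpop.1
  have hij := (R.pair_adj hp).ne
  have hA : IsMatching R.H
      {s(R.va i, R.vc i), s(R.vd i, R.vf i j hp), s(R.va j, R.vc j)} :=
    ((isMatching_singleton (R.adj_va_vc j)).insert (R.adj_vd_vf hp) (by simp [Subtype.ext_iff])
      (by simp [Subtype.ext_iff])).insert (R.adj_va_vc i) (by simp [Subtype.ext_iff, hij])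
      (by simp [Subtype.ext_iff, hij])
  refine hpop.false_of_replaceEdges hA
    (I := [R.va i, R.vc i, R.vf i j hp, R.vc j, R.va j]) (J := [R.vd i, z, R.vd j])
    (by simp [Subtype.ext_iff, hij]) ?_ ?_ ?_ (by simp)
  · simp only [List.mem_cons, List.not_mem_nil, or_false, forall_eq_or_imp, forall_eq]
    refine ⟨?_, ?_, ?_, ?_, ?_⟩
    · simp [rank_replaceEdges_of_mem hM hA (Or.inl rfl), rank_of_mem hM hdi]
    · rwa [rank_replaceEdges_of_mem hM hA (Or.inl Sym2.eq_swap), rank_of_mem hM hz, prefH_vc_va]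
    · simp [rank_replaceEdges_of_mem hM hA (Or.inr (Or.inl Sym2.eq_swap)), rank_of_mem hM hfc]
    · simp [rank_replaceEdges_of_mem hM hA (Or.inr (Or.inr Sym2.eq_swap)),
        rank_of_mem hM (mk_mem_comm.mp hfc)]
    · simp [rank_replaceEdges_of_mem hM hA (Or.inr (Or.inr rfl)), rank_of_mem hM hdj]
  · rintro f (rfl | rfl | rfl) v hv <;> rcases Sym2.mem_iff.mp hv with rfl | rfl <;> simp
  · rintro f (rfl | rfl | rfl) v hv <;> rcases Sym2.mem_iff.mp hv with rfl | rfl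
    · exact hM.forall_partner hdi (by simp)
    · exact hM.forall_partner hz (by simp)
    · exact hM.forall_partner (mk_mem_comm.mp hdi) (by simp)
    · exact hM.forall_partner hfc (by simp)
    · exact hM.forall_partner hdj (by simp)
    · exact hM.forall_partner (mk_mem_comm.mp hfc) (by simp)

theorem not_va_vd_mem_and_va_vd_mem (hpop : IsPopular R.H R.prefH M) (hp : s(i, j) ∈ R.P)
    (hdi : s(R.va i, R.vd i) ∈ M) (hdj : s(R.va j, R.vd j) ∈ M) : False := by
  have hM := hpop.1
  by_cases hC : Matched M (R.vc i)
  · obtain ⟨z, hz⟩ := hC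
    have hcz : 1 < R.prefH (R.vc i) z := R.one_lt_prefH_vc hp (hM.adj hz) (by
      rintro rfl
      simpa [Subtype.ext_iff] using hM.eq_of_mk_mem (mk_mem_comm.mp hz) hdi)
    by_cases hF : Matched M (R.vf i j hp)
    · obtain ⟨w, hw⟩ := hF
      rcases R.adj_vf_cases hp (hM.adj hw) with rfl | rfl
      · simpa [Subtype.ext_iff] using hM.eq_of_mk_mem (mk_mem_comm.mp hw) (mk_mem_comm.mp hdi)
      · exact R.false_of_va_vd_mem_of_vf_vc_mem hpop hp hdi hdj hz hcz hw
    · exact R.false_of_va_vd_mem_of_vf_not_matched hpop hp hdi hz hcz hF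
  · refine hpop.false_of_blocking (R.adj_va_vc i).symm hC ?_ ?_
    · rw [prefH_vc_va]
      exact one_lt_rank_of_not_matched (R.adj_va_vc i).symm hC
    · simp [rank_of_mem hM hdi]

theorem va_vb_mem_or_va_vd_mem (hpop : IsPopular R.H R.prefH M) (i : V) :
    s(R.va i, R.vb i) ∈ M ∨ s(R.va i, R.vd i) ∈ M := by
  obtain ⟨x, hx⟩ := R.matched_va hpop i
  rcases R.adj_va_cases (hpop.1.adj hx) with rfl | rfl | rfl
  · exact Or.inl hx
  · exact (R.va_vc_not_mem hpop i hx).elim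
  · exact Or.inr hx

theorem va_vb_mem_iff_not_mem (hpop : IsPopular R.H R.prefH M) (hp : s(i, j) ∈ R.P) :
    s(R.va i, R.vb i) ∈ M ↔ s(R.va j, R.vb j) ∉ M := by
  refine ⟨R.not_va_vb_mem_and_va_vb_mem hpop hp, fun hj => by_contra fun hi => ?_⟩
  exact R.not_va_vd_mem_and_va_vd_mem hpop hp
    ((R.va_vb_mem_or_va_vd_mem hpop i).resolve_left hi)
    ((R.va_vb_mem_or_va_vd_mem hpop j).resolve_left hj)

end Reduction

/-- If `M` is a popular matching in `H` and `U = {i : {a_i, b_i} ∈ M}`, then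
`|U ∩ P| = 1` for every pair `P ∈ 𝒫`. -/
theorem popular_pair_count {V : Type u} [LinearOrder V] (R : Reduction V)
    (M : Set (Sym2 R.HV)) (hM : IsPopular R.H R.prefH M) :
    ∀ e ∈ R.P, {x : V | x ∈ e ∧ s(R.va x, R.vb x) ∈ M}.ncard = 1 := by
  rintro ⟨i, j⟩ hp
  exact Sym2.ncard_setOf_mem_and_eq_one (R.va_vb_mem_iff_not_mem hM hp)
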